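/- In the burning game on the path P_n with Burner moving first, Burner can force all vertices to burn within r rounds whenever n ≤ r(r+1)/2. -/
import Mathlib


namespace BurningGame

/-- One spreading phase: all neighbors of burned vertices become burned. -/
noncomputable def spread {V : Type*} [Fintype V] [DecidableEq V] (G : SimpleGraph V) (B : Finset V) : Finset V :=
  ((↑B : Set V) ∪ {v | ∃ u ∈ B, G.Adj u v}).toFinite.toFinset

/-- `EndBy G turn i B k`: starting from burned set `B` at round index `i`
(the player selecting in round `i` is Burner iff `turn i = true`; Burner's selections are
quantified existentially, Staller's universally), Burner can force the game to end
within `k` further rounds. -/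
def EndBy {V : Type*} [Fintype V] [DecidableEq V] (G : SimpleGraph V) (turn : ℕ → Bool) :
    ℕ → Finset V → ℕ → Prop
  | _, B, 0 => B = Finset.univ
  | i, B, k + 1 => B = Finset.univ ∨
      spread G B = Finset.univ ∨
      (if turn i then ∃ v ∉ spread G B, EndBy G turn (i + 1) (insert v (spread G B)) k
       else ∀ v ∉ spread G B, EndBy G turn (i + 1) (insert v (spread G B)) k)

/-- Game burning number relative to a preburned set `S` (Burner starts). -/
noncomputable def bgRel {V : Type*} [Fintype V] [DecidableEq V] (G : SimpleGraph V) (S : Finset V) : ℕ :=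
  sInf {k | EndBy G (fun i => i % 2 == 0) 0 S k}

/-- The game burning number (Burner starts). -/
noncomputable def bg {V : Type*} [Fintype V] [DecidableEq V] (G : SimpleGraph V) : ℕ := bgRel G ∅

/-- The Staller-start game burning number. -/
noncomputable def bg' {V : Type*} [Fintype V] [DecidableEq V] (G : SimpleGraph V) : ℕ :=
  sInf {k | EndBy G (fun i => i % 2 == 1) 0 ∅ k}

/-- The burning number: only Burner plays. -/
noncomputable def burn {V : Type*} [Fintype V] [DecidableEq V] (G : SimpleGraph V) : ℕ :=
  sInf {k | EndBy G (fun _ => true) 0 ∅ k}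

/-- The cooling number: only Staller plays. -/
noncomputable def cool {V : Type*} [Fintype V] [DecidableEq V] (G : SimpleGraph V) : ℕ :=
  sInf {k | EndBy G (fun _ => false) 0 ∅ k}

/- ===== auxiliary lemmas ===== -/

lemma mem_spread {V : Type*} [Fintype V] [DecidableEq V] (G : SimpleGraph V) (B : Finset V)
    (v : V) : v ∈ spread G B ↔ v ∈ B ∨ ∃ u ∈ B, G.Adj u v := by
  simp [spread]

lemma subset_spread {V : Type*} [Fintype V] [DecidableEq V] (G : SimpleGraph V) (B : Finset V) :
    B ⊆ spread G B := fun v hv => (mem_spread G B v).mpr (Or.inl hv)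

lemma spread_mono {V : Type*} [Fintype V] [DecidableEq V] (G : SimpleGraph V) {B C : Finset V}
    (h : B ⊆ C) : spread G B ⊆ spread G C := by
  intro v hv
  rw [mem_spread] at hv ⊢
  rcases hv with h1 | ⟨u, hu, hadj⟩
  · exact Or.inl (h h1)
  · exact Or.inr ⟨u, h hu, hadj⟩

/-- Partial sums of block lengths `2*(r-1-2j)+1`. -/
def sN (r : ℕ) : ℕ → ℕ
  | 0 => 0
  | j + 1 => sN r j + (2 * (r - 1 - 2 * j) + 1)

/-- Center of the `j`-th block, clamped to `[0, n-1]`. -/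
def ctr (n r j : ℕ) : ℕ := min (sN r j + (r - 1 - 2 * j)) (n - 1)

lemma ctr_lt (n r j : ℕ) (hn : 0 < n) : ctr n r j < n := by
  unfold ctr; omega

/-- Burner's solo schedule: the burned set at the end of round `t` if Burner burns the
centers `ctr n r j` on his turns and Staller passes. -/
noncomputable def sched (n r : ℕ) (hn : 0 < n) : ℕ → Finset (Fin n)
  | 0 => ∅
  | t + 1 =>
      if t % 2 = 0 then
        insert ⟨ctr n r (t / 2), ctr_lt n r _ hn⟩
          (spread (SimpleGraph.pathGraph n) (sched n r hn t))
      else spread (SimpleGraph.pathGraph n) (sched n r hn t)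

lemma sched_succ (n r : ℕ) (hn : 0 < n) (t : ℕ) :
    sched n r hn (t + 1) =
      if t % 2 = 0 then
        insert ⟨ctr n r (t / 2), ctr_lt n r _ hn⟩
          (spread (SimpleGraph.pathGraph n) (sched n r hn t))
      else spread (SimpleGraph.pathGraph n) (sched n r hn t) := rfl

lemma mem_spread_of_dist {n : ℕ} (c : ℕ) (hc : c < n) (ρ : ℕ) (B : Finset (Fin n))
    (hB : ∀ w : Fin n, Nat.dist w.val c ≤ ρ → w ∈ B)
    (v : Fin n) (hv : Nat.dist v.val c ≤ ρ + 1) :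
    v ∈ spread (SimpleGraph.pathGraph n) B := by
  have hdist : ∀ a b : ℕ, Nat.dist a b = (a - b) + (b - a) := fun a b => rfl
  by_cases hle : Nat.dist v.val c ≤ ρ
  · exact subset_spread _ _ (hB v hle)
  · rw [mem_spread]
    rcases lt_or_gt_of_ne (show v.val ≠ c by
      intro h; rw [h, Nat.dist_self] at hle; omega) with hlt | hgt
    · refine Or.inr ⟨⟨v.val + 1, by omega⟩, hB _ ?_, ?_⟩
      · rw [hdist] at hv ⊢; simp only []; omega
      · rw [SimpleGraph.pathGraph_adj]; right; rfl
    · refine Or.inr ⟨⟨v.val - 1, by omega⟩, hB _ ?_, ?_⟩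
      · rw [hdist] at hv ⊢; simp only []; omega
      · rw [SimpleGraph.pathGraph_adj]; left; simp only []; omega

lemma ball_subset_sched (n r : ℕ) (hn : 0 < n) :
    ∀ t j, 2 * j < t → ∀ v : Fin n,
      Nat.dist v.val (ctr n r j) ≤ t - (2 * j + 1) → v ∈ sched n r hn t := by
  intro t
  induction t with
  | zero => omega
  | succ t ih =>
      intro j hj v hv
      rcases Nat.lt_or_ge (2 * j) t with hlt | hge
      · -- old ball: spread of the ball of radius t - (2j+1)
        have hmem : v ∈ spread (SimpleGraph.pathGraph n) (sched n r hn t) := by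
          apply mem_spread_of_dist (ctr n r j) (ctr_lt n r j hn) (t - (2 * j + 1))
          · intro w hw; exact ih j hlt w hw
          · omega
        rw [sched_succ]
        split
        · exact Finset.mem_insert_of_mem hmem
        · exact hmem
      · -- new center: 2j = t
        have ht : 2 * j = t := by omega
        have h0 : Nat.dist v.val (ctr n r j) = 0 := by omega
        have hveq : v.val = ctr n r j := Nat.eq_of_dist_eq_zero h0
        have ht2 : t % 2 = 0 := by omega
        rw [sched_succ, if_pos ht2]
        have hdiv : t / 2 = j := by omega
        have hveq' : v = (⟨ctr n r (t / 2), ctr_lt n r _ hn⟩ : Fin n) := by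
          apply Fin.ext
          rw [hdiv]
          exact hveq
        rw [hveq']
        exact Finset.mem_insert_self _ _

lemma sN_val (r : ℕ) : ∀ j, 2 * j ≤ r + 1 → 2 * sN r j + (2 * j) * (2 * j) = 2 * j * (2 * r + 1) := by
  intro j
  induction j with
  | zero => simp [sN]
  | succ j ih =>
      intro hj
      have h1 := ih (by omega)
      obtain ⟨d, hd⟩ : ∃ d, r = 2 * j + 1 + d := ⟨r - (2 * j + 1), by omega⟩
      subst hd
      show 2 * (sN _ j + (2 * (2 * j + 1 + d - 1 - 2 * j) + 1)) + _ = _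
      have hsub : 2 * j + 1 + d - 1 - 2 * j = d := by omega
      rw [hsub]
      nlinarith [h1]

lemma sN_big (r : ℕ) : r * (r + 1) / 2 ≤ sN r ((r + 1) / 2) := by
  suffices h : r * (r + 1) ≤ 2 * sN r ((r + 1) / 2) by
    obtain ⟨P, hP⟩ : ∃ P, r * (r + 1) = P := ⟨_, rfl⟩
    rw [hP] at h ⊢; omega
  rcases Nat.even_or_odd r with ⟨m, hm⟩ | ⟨m, hm⟩
  · have hj : (r + 1) / 2 = m := by omega
    have key := sN_val r m (by omega)
    rw [hj]
    nlinarith [key]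
  · have hj : (r + 1) / 2 = m + 1 := by omega
    have key := sN_val r (m + 1) (by omega)
    rw [hj]
    nlinarith [key]

lemma cover (n r : ℕ) (hn : 0 < n) (h : n ≤ r * (r + 1) / 2) (v : Fin n) :
    ∃ j, 2 * j < r ∧ Nat.dist v.val (ctr n r j) ≤ r - (2 * j + 1) := by
  have hdist : ∀ a b : ℕ, Nat.dist a b = (a - b) + (b - a) := fun a b => rfl
  have main : ∀ j, 2 * j ≤ r + 1 → v.val < sN r j →
      ∃ j', 2 * j' < r ∧ Nat.dist v.val (ctr n r j') ≤ r - (2 * j' + 1) := by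
    intro j
    induction j with
    | zero => simp [sN]
    | succ j ih =>
        intro hj hv
        rcases Nat.lt_or_ge v.val (sN r j) with hlt | hge
        · exact ih (by omega) hlt
        · refine ⟨j, by omega, ?_⟩
          have hvn : v.val < n := v.isLt
          have hs : sN r (j + 1) = sN r j + (2 * (r - 1 - 2 * j) + 1) := rfl
          rw [hdist]
          unfold ctr
          omega
  have hlast := main ((r + 1) / 2) (by omega)
  apply hlast
  have := sN_big r
  omega

lemma sched_univ (n r : ℕ) (hn : 0 < n) (h : n ≤ r * (r + 1) / 2) :
    sched n r hn r = Finset.univ := by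
  apply Finset.eq_univ_of_forall
  intro v
  obtain ⟨j, hj, hd⟩ := cover n r hn h v
  exact ball_subset_sched n r hn r j hj v hd

lemma main_ind (n r : ℕ) (hn : 0 < n) (h : n ≤ r * (r + 1) / 2) :
    ∀ k i (B : Finset (Fin n)), i + k = r → sched n r hn i ⊆ B →
      EndBy (SimpleGraph.pathGraph n) (fun i => i % 2 == 0) i B k := by
  intro k
  induction k with
  | zero =>
      intro i B hik hB
      have hir : i = r := by omega
      rw [hir] at hB
      show B = Finset.univ
      exact Finset.univ_subset_iff.mp (by rwa [sched_univ n r hn h] at hB)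
  | succ k ih =>
      intro i B hik hB
      set G := SimpleGraph.pathGraph n
      by_cases hsp : spread G B = Finset.univ
      · exact Or.inr (Or.inl hsp)
      right; right
      have hspm : spread G (sched n r hn i) ⊆ spread G B := spread_mono G hB
      by_cases hi2 : i % 2 = 0
      · -- Burner's turn
        rw [if_pos (by simp [hi2])]
        set c : Fin n := ⟨ctr n r (i / 2), ctr_lt n r _ hn⟩ with hc
        have hsched : sched n r hn (i + 1) = insert c (spread G (sched n r hn i)) := by
          rw [sched_succ, if_pos hi2]
        by_cases hcB : c ∈ spread G B
        · obtain ⟨w, hw⟩ : ∃ w, w ∉ spread G B := by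
            by_contra hcon
            push_neg at hcon
            exact hsp (Finset.eq_univ_of_forall hcon)
          refine ⟨w, hw, ih (i + 1) _ (by omega) ?_⟩
          rw [hsched]
          intro x hx
          rcases Finset.mem_insert.mp hx with hxc | hxs
          · exact Finset.mem_insert_of_mem (hxc ▸ hcB)
          · exact Finset.mem_insert_of_mem (hspm hxs)
        · refine ⟨c, hcB, ih (i + 1) _ (by omega) ?_⟩
          rw [hsched]
          exact Finset.insert_subset_insert c hspm
      · -- Staller's turn
        rw [if_neg (by simp [hi2])]
        intro v hv
        apply ih (i + 1) _ (by omega)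
        have hsched : sched n r hn (i + 1) = spread G (sched n r hn i) := by
          rw [sched_succ, if_neg hi2]
        rw [hsched]
        exact fun x hx => Finset.mem_insert_of_mem (hspm hx)

theorem stmt17 (n r : ℕ) (h : n ≤ r * (r + 1) / 2) :
    EndBy (SimpleGraph.pathGraph n) (fun i => i % 2 == 0) 0 ∅ r := by
  rcases Nat.eq_zero_or_pos n with hn | hn
  · subst hn
    cases r with
    | zero => show (∅ : Finset (Fin 0)) = Finset.univ; simp [Finset.univ_eq_empty]
    | succ k =>
        left
        simp [Finset.univ_eq_empty]
  · exact main_ind n r hn h r 0 ∅ (by omega) (by simp [sched])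

end BurningGame
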